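/- Fix K > 0. There exists a constant C such that for every N ≥ 1 and all x, y ∈ [−K, K]: |√N · Σ_{n=N+1}^∞ H_n(x)·H_n(y) / (2n · 2ⁿ · n!)| ≤ C. -/

import Mathlib

open Filter Topology

/-- The physicist Hermite polynomials, defined by their three-term recurrence. -/
noncomputable def physHermite : ℕ → ℝ → ℝ
  | 0 => fun _ => 1
  | 1 => fun x => 2 * x
  | (n + 2) => fun x => 2 * x * physHermite (n + 1) x - 2 * (n + 1) * physHermite n x

lemma physHermite_succ_succ (n : ℕ) (x : ℝ) :
    physHermite (n+2) x = 2 * x * physHermite (n+1) x - 2 * (n+1) * physHermite n x := rfl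

noncomputable def pHd : ℕ → ℝ → ℝ
  | 0 => fun _ => 0
  | (n+1) => fun x => 2*(n+1) * physHermite n x

lemma hasDerivAt_physHermite (n : ℕ) (x : ℝ) :
    HasDerivAt (physHermite n) (pHd n x) x := by
  induction n using Nat.twoStepInduction generalizing x with
  | zero => simpa [physHermite, pHd] using (hasDerivAt_const x (1:ℝ))
  | one => simpa [physHermite, pHd] using ((hasDerivAt_id x).const_mul (2:ℝ))
  | more n ih0 ih1 =>
    have h : HasDerivAt (physHermite (n+2))
        (2 * physHermite (n+1) x + 2 * x * pHd (n+1) x - 2*(n+1) * pHd n x) x := by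
      have := (((hasDerivAt_id x).const_mul (2:ℝ)).mul (ih1 x)).sub ((ih0 x).const_mul (2*(n+1) : ℝ))
      simp only [id_eq] at this
      exact this.congr_deriv (by ring)
    convert h using 1
    cases n with
    | zero => simp [pHd, physHermite]; ring
    | succ m =>
      simp only [pHd, physHermite_succ_succ]
      push_cast
      ring

lemma physHermite_neg (n : ℕ) (x : ℝ) : physHermite n (-x) = (-1)^n * physHermite n x := by
  induction n using Nat.twoStepInduction generalizing x with
  | zero => simp [physHermite]
  | one => simp [physHermite]
  | more n ih0 ih1 =>
    simp only [physHermite_succ_succ, ih0, ih1, pow_succ]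
    ring

lemma physHermite_odd_zero (m : ℕ) : physHermite (2*m+1) 0 = 0 := by
  induction m with
  | zero => simp [physHermite]
  | succ k ih =>
    have : 2*(k+1)+1 = (2*k+1) + 2 := by ring
    rw [this, physHermite_succ_succ, ih]
    ring

lemma physHermite_even_zero (m : ℕ) :
    physHermite (2*m) 0 = (-1)^m * (2*m).factorial / m.factorial := by
  induction m with
  | zero => simp [physHermite]
  | succ k ih =>
    have h2 : 2*(k+1) = (2*k) + 2 := by ring
    rw [h2, physHermite_succ_succ, ih]
    have hk : (k.factorial : ℝ) ≠ 0 := by positivity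
    have hk1 : ((k+1).factorial : ℝ) ≠ 0 := by positivity
    have hfac : ((2*k+2).factorial : ℝ) = (2*k+2) * (2*k+1) * (2*k).factorial := by
      rw [show 2*k+2 = (2*k+1)+1 by ring, Nat.factorial_succ, Nat.factorial_succ]
      push_cast; ring
    have hfac1 : ((k+1).factorial : ℝ) = (k+1) * k.factorial := by
      rw [Nat.factorial_succ]; push_cast; ring
    rw [hfac, hfac1, pow_succ]
    field_simp
    push_cast
    ring

lemma centralBinom_sqrt_le (m : ℕ) :
    (Nat.centralBinom m : ℝ) * Real.sqrt (m+1) ≤ 4^m := by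
  induction m with
  | zero => simp [Nat.centralBinom_zero]
  | succ k ih =>
    have hrec : ((k+1 : ℕ) : ℝ) * Nat.centralBinom (k+1) = 2 * (2*k+1) * Nat.centralBinom k := by
      exact_mod_cast congrArg (Nat.cast : ℕ → ℝ) (Nat.succ_mul_centralBinom_succ k)
    have hcbpos : (0:ℝ) < Nat.centralBinom k := by exact_mod_cast Nat.centralBinom_pos k
    have hcb1pos : (0:ℝ) < Nat.centralBinom (k+1) := by exact_mod_cast Nat.centralBinom_pos (k+1)
    -- key numeric inequality: 2*(2k+1)*√(k+2) ≤ 4*(k+1)*√(k+1)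
    have hs1 : (0:ℝ) ≤ (k:ℝ)+1 := by positivity
    have hs2 : (0:ℝ) ≤ (k:ℝ)+2 := by positivity
    have key : 2*(2*(k:ℝ)+1) * Real.sqrt ((k:ℝ)+2) ≤ 4*((k:ℝ)+1) * Real.sqrt ((k:ℝ)+1) := by
      have h1 : (2*(2*(k:ℝ)+1) * Real.sqrt ((k:ℝ)+2))^2 ≤ (4*((k:ℝ)+1) * Real.sqrt ((k:ℝ)+1))^2 := by
        have e1 : (Real.sqrt ((k:ℝ)+2))^2 = (k:ℝ)+2 := Real.sq_sqrt hs2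
        have e2 : (Real.sqrt ((k:ℝ)+1))^2 = (k:ℝ)+1 := Real.sq_sqrt hs1
        have : (2*(2*(k:ℝ)+1))^2 * ((k:ℝ)+2) ≤ (4*((k:ℝ)+1))^2 * ((k:ℝ)+1) := by nlinarith [sq_nonneg ((k:ℝ))]
        calc (2*(2*(k:ℝ)+1) * Real.sqrt ((k:ℝ)+2))^2 = (2*(2*(k:ℝ)+1))^2 * ((k:ℝ)+2) := by
              rw [mul_pow, e1]
          _ ≤ (4*((k:ℝ)+1))^2 * ((k:ℝ)+1) := this
          _ = (4*((k:ℝ)+1))^2 * (Real.sqrt ((k:ℝ)+1))^2 := by rw [e2]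
          _ = (4*((k:ℝ)+1) * Real.sqrt ((k:ℝ)+1))^2 := by ring
      have hb : (0:ℝ) ≤ 4*((k:ℝ)+1) * Real.sqrt ((k:ℝ)+1) := by positivity
      nlinarith [Real.sqrt_nonneg ((k:ℝ)+2)]
    -- multiply ih by things
    have hkpos : (0:ℝ) < (k:ℝ)+1 := by positivity
    have goal' : ((k+1:ℕ):ℝ) * ((Nat.centralBinom (k+1) : ℝ) * Real.sqrt ((k:ℝ)+2)) ≤ ((k:ℝ)+1) * 4^(k+1) := by
      have lhs_eq : ((k+1:ℕ):ℝ) * ((Nat.centralBinom (k+1) : ℝ) * Real.sqrt ((k:ℝ)+2))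
          = 2*(2*(k:ℝ)+1) * (Nat.centralBinom k : ℝ) * Real.sqrt ((k:ℝ)+2) := by
        push_cast at hrec ⊢
        rw [← mul_assoc, hrec]
      rw [lhs_eq]
      calc 2*(2*(k:ℝ)+1) * (Nat.centralBinom k : ℝ) * Real.sqrt ((k:ℝ)+2)
          ≤ (Nat.centralBinom k : ℝ) * (4*((k:ℝ)+1) * Real.sqrt ((k:ℝ)+1)) := by
            have := mul_le_mul_of_nonneg_left key (le_of_lt hcbpos)
            nlinarith [this]
        _ = 4*((k:ℝ)+1) * ((Nat.centralBinom k : ℝ) * Real.sqrt ((k:ℝ)+1)) := by ring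
        _ ≤ 4*((k:ℝ)+1) * 4^k := by
            have h4 : (0:ℝ) ≤ 4*((k:ℝ)+1) := by positivity
            exact mul_le_mul_of_nonneg_left ih h4
        _ = ((k:ℝ)+1) * 4^(k+1) := by ring
    have hcast : ((k+1:ℕ):ℝ) = (k:ℝ)+1 := by push_cast; ring
    rw [hcast] at goal'
    have := (mul_le_mul_iff_right₀ hkpos).mp goal'
    have heq : ((k+1:ℕ):ℝ)+1 = (k:ℝ)+2 := by push_cast; ring
    rw [heq]
    exact this

lemma Heven_sq (m : ℕ) :
    (physHermite (2*m) 0)^2 = ((2*m).factorial : ℝ) * (Nat.centralBinom m : ℝ) := by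
  rw [physHermite_even_zero]
  have hfac : ((2*m).factorial : ℝ) = (Nat.centralBinom m : ℝ) * (m.factorial : ℝ) * (m.factorial : ℝ) := by
    have := Nat.choose_mul_factorial_mul_factorial (Nat.le_mul_of_pos_left m (by norm_num) : m ≤ 2*m)
    have h2 : 2*m - m = m := by omega
    rw [h2] at this
    rw [Nat.centralBinom]
    exact_mod_cast this.symm
  have hm : (m.factorial : ℝ) ≠ 0 := by positivity
  rw [div_pow, mul_pow, ← pow_mul]
  rw [show m * 2 = 2 * m from mul_comm m 2]
  rw [pow_mul, neg_one_sq, one_pow, one_mul]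
  rw [hfac]
  field_simp

lemma sqrt_prod_ge (m n : ℕ) (hmn : m ≤ n) :
    (m:ℝ)+1 ≤ Real.sqrt ((n:ℝ)+1) * Real.sqrt ((m:ℝ)+1) := by
  have h1 : Real.sqrt ((m:ℝ)+1) ≤ Real.sqrt ((n:ℝ)+1) := by
    apply Real.sqrt_le_sqrt
    have : (m:ℝ) ≤ n := by exact_mod_cast hmn
    linarith
  calc (m:ℝ)+1 = Real.sqrt ((m:ℝ)+1) * Real.sqrt ((m:ℝ)+1) := (Real.mul_self_sqrt (by positivity)).symm
    _ ≤ Real.sqrt ((n:ℝ)+1) * Real.sqrt ((m:ℝ)+1) :=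
        mul_le_mul_of_nonneg_right h1 (Real.sqrt_nonneg _)

lemma E0_bound (n : ℕ) (hn : 1 ≤ n) :
    (2*(n:ℝ) * physHermite (n-1) 0)^2 + (2*(n:ℝ)+1) * (physHermite n 0)^2
      ≤ 4 * 2^n * (n.factorial : ℝ) * Real.sqrt ((n:ℝ)+1) := by
  have hsm : ∀ m : ℕ, (0:ℝ) < Real.sqrt ((m:ℝ)+1) := fun m => Real.sqrt_pos.mpr (by positivity)
  rcases Nat.even_or_odd n with ⟨m, hm⟩ | ⟨m, hm⟩
  · -- n = 2m, m ≥ 1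
    have hm2 : n = 2*m := by omega
    have hm1 : 1 ≤ m := by omega
    have hodd : n - 1 = 2*(m-1)+1 := by omega
    rw [hodd, physHermite_odd_zero, hm2]
    rw [Heven_sq]
    have hcb := centralBinom_sqrt_le m
    have hkey : ((m:ℝ)+1) ≤ Real.sqrt ((2*m:ℕ):ℝ) * Real.sqrt ((m:ℝ)+1) := by
      have := sqrt_prod_ge m (2*m-1) (by omega)
      have he : ((2*m-1:ℕ):ℝ)+1 = ((2*m:ℕ):ℝ) := by
        have : (2*m-1)+1 = 2*m := by omega
        exact_mod_cast congrArg (Nat.cast : ℕ → ℝ) this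
      rwa [he] at this
    -- want : (2(2m)+1) * ((2m)! * c_m) ≤ 4 * 2^(2m) * (2m)! * √(2m+1)
    have hfacpos : (0:ℝ) < ((2*m).factorial : ℝ) := by positivity
    rw [mul_zero, zero_pow (by norm_num), zero_add]
    -- multiply both sides by √(m+1)
    rw [← mul_le_mul_iff_left₀ (hsm m)]
    have hsq : Real.sqrt (((2*m:ℕ):ℝ)+1) * Real.sqrt ((m:ℝ)+1) ≥ (m:ℝ)+1 := by
      have := sqrt_prod_ge m (2*m) (by omega)
      linarith [this]
    calc (2*((2*m:ℕ):ℝ)+1) * (((2*m).factorial : ℝ) * (Nat.centralBinom m : ℝ)) * Real.sqrt ((m:ℝ)+1)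
        = (2*((2*m:ℕ):ℝ)+1) * ((2*m).factorial : ℝ) * ((Nat.centralBinom m : ℝ) * Real.sqrt ((m:ℝ)+1)) := by ring
      _ ≤ (2*((2*m:ℕ):ℝ)+1) * ((2*m).factorial : ℝ) * 4^m := by
          apply mul_le_mul_of_nonneg_left hcb
          positivity
      _ ≤ 4 * 2^(2*m) * ((2*m).factorial : ℝ) * Real.sqrt (((2*m:ℕ):ℝ)+1) * Real.sqrt ((m:ℝ)+1) := by
          have h4 : (4:ℝ)^m = 2^(2*m) := by rw [show (4:ℝ) = 2^2 by norm_num, ← pow_mul]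
          rw [h4]
          have hco : (2*((2*m:ℕ):ℝ)+1) ≤ 4 * (Real.sqrt (((2*m:ℕ):ℝ)+1) * Real.sqrt ((m:ℝ)+1)) := by
            have hcast : ((2*m:ℕ):ℝ) = 2*(m:ℝ) := by push_cast; ring
            rw [hcast] at hsq ⊢
            linarith [hsq]
          calc (2*((2*m:ℕ):ℝ)+1) * ((2*m).factorial : ℝ) * 2^(2*m)
              ≤ (4 * (Real.sqrt (((2*m:ℕ):ℝ)+1) * Real.sqrt ((m:ℝ)+1))) * ((2*m).factorial : ℝ) * 2^(2*m) := by
                apply mul_le_mul_of_nonneg_right (mul_le_mul_of_nonneg_right hco (le_of_lt hfacpos))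
                positivity
            _ = 4 * 2^(2*m) * ((2*m).factorial : ℝ) * Real.sqrt (((2*m:ℕ):ℝ)+1) * Real.sqrt ((m:ℝ)+1) := by
                ring
  · -- n = 2m+1
    have hm2 : n = 2*m+1 := hm
    have hodd : physHermite n 0 = 0 := by rw [hm2]; exact physHermite_odd_zero m
    have hprev : n - 1 = 2*m := by omega
    rw [hodd, hprev]
    rw [zero_pow (two_ne_zero), mul_zero, add_zero]
    have hsq2 : (2*(n:ℝ) * physHermite (2*m) 0)^2 = 4*(n:ℝ)^2 * (((2*m).factorial : ℝ) * (Nat.centralBinom m : ℝ)) := by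
      rw [mul_pow, mul_pow, Heven_sq]; ring
    rw [hsq2]
    have hcb := centralBinom_sqrt_le m
    have hfacpos : (0:ℝ) < ((2*m).factorial : ℝ) := by positivity
    rw [← mul_le_mul_iff_left₀ (hsm m)]
    have hsq : Real.sqrt ((n:ℝ)+1) * Real.sqrt ((m:ℝ)+1) ≥ (m:ℝ)+1 := sqrt_prod_ge m n (by omega)
    have hnfac : (n.factorial : ℝ) = (2*(m:ℝ)+1) * ((2*m).factorial : ℝ) := by
      rw [hm2, Nat.factorial_succ]
      push_cast; ring
    have h2n : (2:ℝ)^n = 2 * 2^(2*m) := by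
      rw [hm2, pow_succ]; ring
    have hncast : (n:ℝ) = 2*(m:ℝ)+1 := by rw [hm2]; push_cast; ring
    calc 4*(n:ℝ)^2 * (((2*m).factorial : ℝ) * (Nat.centralBinom m : ℝ)) * Real.sqrt ((m:ℝ)+1)
        = 4*(n:ℝ)^2 * ((2*m).factorial : ℝ) * ((Nat.centralBinom m : ℝ) * Real.sqrt ((m:ℝ)+1)) := by ring
      _ ≤ 4*(n:ℝ)^2 * ((2*m).factorial : ℝ) * 4^m := by
          apply mul_le_mul_of_nonneg_left hcb
          positivity
      _ ≤ 4 * 2^n * (n.factorial : ℝ) * Real.sqrt ((n:ℝ)+1) * Real.sqrt ((m:ℝ)+1) := by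
          have h4 : (4:ℝ)^m = 2^(2*m) := by rw [show (4:ℝ) = 2^2 by norm_num, ← pow_mul]
          have hco : 4*(n:ℝ)^2 ≤ 4 * 2 * (2*(m:ℝ)+1) * (Real.sqrt ((n:ℝ)+1) * Real.sqrt ((m:ℝ)+1)) := by
            have h1 : 4*(2*(m:ℝ)+1)^2 ≤ 4*2*(2*(m:ℝ)+1)*((m:ℝ)+1) := by nlinarith
            have h2 : 4*2*(2*(m:ℝ)+1)*((m:ℝ)+1) ≤ 4*2*(2*(m:ℝ)+1)*(Real.sqrt ((n:ℝ)+1) * Real.sqrt ((m:ℝ)+1)) := by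
              apply mul_le_mul_of_nonneg_left hsq
              positivity
            rw [hncast] at h2 ⊢
            linarith
          calc 4*(n:ℝ)^2 * ((2*m).factorial : ℝ) * 4^m
              ≤ (4 * 2 * (2*(m:ℝ)+1) * (Real.sqrt ((n:ℝ)+1) * Real.sqrt ((m:ℝ)+1))) * ((2*m).factorial : ℝ) * 4^m := by
                apply mul_le_mul_of_nonneg_right (mul_le_mul_of_nonneg_right hco (le_of_lt hfacpos))
                positivity
            _ = 4 * 2^n * (n.factorial : ℝ) * Real.sqrt ((n:ℝ)+1) * Real.sqrt ((m:ℝ)+1) := by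
                rw [h4, hnfac, h2n]
                ring

lemma hermite_ode (m : ℕ) (t : ℝ) :
    2*((m:ℝ)+1) * pHd m t = 2*t*pHd (m+1) t - 2*((m:ℝ)+1)*physHermite (m+1) t := by
  cases m with
  | zero => simp [pHd, physHermite]; ring
  | succ k =>
    simp only [pHd, physHermite_succ_succ]
    push_cast
    ring

lemma hasDerivAt_gauss (t : ℝ) :
    HasDerivAt (fun s : ℝ => Real.exp (-(s^2)/2)) (-t * Real.exp (-(t^2)/2)) t := by
  have h : HasDerivAt (fun s : ℝ => -(s^2)/2) (-t) t := by
    have := (hasDerivAt_pow 2 t).neg.div_const 2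
    refine this.congr_deriv ?_
    push_cast; ring
  simpa [mul_comm] using h.exp

lemma hermite_sq_le_main (K : ℝ) (hK : 0 < K) (n : ℕ) (hn : 1 ≤ n) (hnK : K^2 ≤ n)
    (x : ℝ) (hx0 : 0 ≤ x) (hxK : x ≤ K) :
    (physHermite n x)^2 ≤ Real.exp (K^2) * (4 * 2^n * (n.factorial : ℝ) / Real.sqrt ((n:ℝ)+1)) := by
  obtain ⟨m, rfl⟩ : ∃ m, n = m + 1 := ⟨n-1, by omega⟩
  set nn : ℝ := (m:ℝ)+1 with hnn
  set u : ℝ → ℝ := fun t => Real.exp (-(t^2)/2) * physHermite (m+1) t with hu_def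
  set v : ℝ → ℝ := fun t => Real.exp (-(t^2)/2) * (2*nn * physHermite m t - t * physHermite (m+1) t) with hv_def
  set E : ℝ → ℝ := fun t => (v t)^2 + (2*nn+1 - t^2) * (u t)^2 with hE_def
  have hu : ∀ t, HasDerivAt u (v t) t := by
    intro t
    have h := (hasDerivAt_gauss t).mul (hasDerivAt_physHermite (m+1) t)
    refine h.congr_deriv ?_
    simp only [hv_def, pHd]
    push_cast
    ring
  have hv : ∀ t, HasDerivAt v (-(2*nn+1 - t^2) * u t) t := by
    intro t
    have hw : HasDerivAt (fun s => 2*nn * physHermite m s - s * physHermite (m+1) s)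
        (2*nn * pHd m t - (physHermite (m+1) t + t * pHd (m+1) t)) t := by
      have := ((hasDerivAt_physHermite m t).const_mul (2*nn)).sub
        ((hasDerivAt_id t).mul (hasDerivAt_physHermite (m+1) t))
      exact this.congr_deriv (by simp)
    have h := (hasDerivAt_gauss t).mul hw
    refine h.congr_deriv ?_
    have hode := hermite_ode m t
    simp only [hu_def, pHd] at *
    push_cast at hode ⊢
    nlinarith [hode, Real.exp_pos (-(t^2)/2)]
  have hE : ∀ t, HasDerivAt E (-2*t*(u t)^2) t := by
    intro t
    have h1 := (hv t).pow 2
    have h2 : HasDerivAt (fun s : ℝ => 2*nn+1 - s^2) (-(2*t)) t := by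
      have := (hasDerivAt_pow 2 t).const_sub (2*nn+1)
      simpa using this
    have h3 := h2.mul ((hu t).pow 2)
    have h := h1.add h3
    refine h.congr_deriv ?_
    push_cast [Pi.pow_apply]
    ring
  have hEanti : AntitoneOn E (Set.Icc 0 K) := by
    apply antitoneOn_of_deriv_nonpos (convex_Icc 0 K)
    · exact fun t _ => (hE t).continuousAt.continuousWithinAt
    · exact fun t _ => ((hE t).differentiableAt).differentiableWithinAt
    · intro t ht
      rw [interior_Icc] at ht
      rw [(hE t).deriv]
      have : 0 ≤ (u t)^2 := sq_nonneg _
      nlinarith [ht.1]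
  have hE0 : E x ≤ E 0 := hEanti (Set.left_mem_Icc.mpr (le_of_lt hK)) ⟨hx0, hxK⟩ hx0
  have hE0val : E 0 ≤ 4 * 2^(m+1) * ((m+1).factorial : ℝ) * Real.sqrt (((m+1:ℕ):ℝ)+1) := by
    have := E0_bound (m+1) (by omega)
    have hprev : (m+1) - 1 = m := by omega
    rw [hprev] at this
    have hcast : ((m+1:ℕ):ℝ) = nn := by push_cast [hnn]; ring
    calc E 0 = (2*nn * physHermite m 0 - 0)^2 + (2*nn+1 - 0) * (physHermite (m+1) 0)^2 := by
          simp [hE_def, hv_def, hu_def]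
      _ = (2*nn * physHermite m 0)^2 + (2*nn+1) * (physHermite (m+1) 0)^2 := by ring
      _ ≤ 4 * 2^(m+1) * ((m+1).factorial : ℝ) * Real.sqrt (((m+1:ℕ):ℝ)+1) := by
          rw [hcast] at this ⊢
          exact this
  have hlow : (nn + 1) * (u x)^2 ≤ E x := by
    have h1 : (2*nn+1 - x^2) * (u x)^2 ≤ E x := by
      simp only [hE_def]
      nlinarith [sq_nonneg (v x)]
    have h2 : nn + 1 ≤ 2*nn+1 - x^2 := by
      have hx2 : x^2 ≤ K^2 := by nlinarith
      have : K^2 ≤ nn := by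
        simp only [hnn]
        push_cast at hnK ⊢
        linarith [hnK]
      linarith
    nlinarith [sq_nonneg (u x)]
  -- combine
  have hsqrtpos : (0:ℝ) < Real.sqrt (((m+1:ℕ):ℝ)+1) := Real.sqrt_pos.mpr (by positivity)
  have hself : Real.sqrt (((m+1:ℕ):ℝ)+1) * Real.sqrt (((m+1:ℕ):ℝ)+1) = ((m+1:ℕ):ℝ)+1 :=
    Real.mul_self_sqrt (by positivity)
  have hu2 : (u x)^2 ≤ 4 * 2^(m+1) * ((m+1).factorial : ℝ) / Real.sqrt (((m+1:ℕ):ℝ)+1) := by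
    rw [le_div_iff₀ hsqrtpos]
    have hnncast : nn + 1 = ((m+1:ℕ):ℝ)+1 := by push_cast [hnn]; ring
    have hchain : (((m+1:ℕ):ℝ)+1) * (u x)^2 ≤ 4 * 2^(m+1) * ((m+1).factorial : ℝ) * Real.sqrt (((m+1:ℕ):ℝ)+1) := by
      calc (((m+1:ℕ):ℝ)+1) * (u x)^2 = (nn+1) * (u x)^2 := by rw [hnncast]
        _ ≤ E x := hlow
        _ ≤ E 0 := hE0
        _ ≤ _ := hE0val
    have := mul_le_mul_of_nonneg_right hchain (le_of_lt hsqrtpos)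
    rw [mul_right_comm] at this
    nlinarith [this, hself, hsqrtpos, sq_nonneg (u x), Real.sqrt_nonneg (((m+1:ℕ):ℝ)+1)]
  have hHu : (physHermite (m+1) x)^2 = Real.exp (x^2) * (u x)^2 := by
    simp only [hu_def]
    rw [mul_pow, ← mul_assoc]
    have : Real.exp (x^2) * (Real.exp (-(x^2)/2))^2 = 1 := by
      have h1 : (Real.exp (-(x^2)/2))^2 = Real.exp (-(x^2)) := by
        rw [sq, ← Real.exp_add]
        congr 1
        ring
      rw [h1, ← Real.exp_add]
      simp
    rw [this, one_mul]
  have hexple : Real.exp (x^2) ≤ Real.exp (K^2) := by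
    apply Real.exp_le_exp.mpr
    nlinarith
  calc (physHermite (m+1) x)^2 = Real.exp (x^2) * (u x)^2 := hHu
    _ ≤ Real.exp (K^2) * (u x)^2 := mul_le_mul_of_nonneg_right hexple (sq_nonneg _)
    _ ≤ Real.exp (K^2) * (4 * 2^(m+1) * ((m+1).factorial : ℝ) / Real.sqrt (((m+1:ℕ):ℝ)+1)) :=
        mul_le_mul_of_nonneg_left hu2 (le_of_lt (Real.exp_pos _))

lemma hermite_crude (K : ℝ) (hK : 0 < K) (n : ℕ) :
    ∀ x : ℝ, |x| ≤ K → |physHermite n x| ≤ (2*K+2*(n:ℝ))^n := by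
  induction n using Nat.twoStepInduction with
  | zero => intro x hx; simp [physHermite]
  | one =>
    intro x hx
    simp only [physHermite, pow_one]
    rw [abs_mul]
    have h2 : |(2:ℝ)| = 2 := by norm_num
    rw [h2]
    push_cast
    linarith
  | more n ih0 ih1 =>
    intro x hx
    have h1 := ih0 x hx
    have h2 := ih1 x hx
    set B : ℝ := 2*K+2*((n:ℝ)+2) with hB
    have hBpos : (1:ℝ) ≤ B := by simp only [hB]; nlinarith
    have hb1 : (2*K+2*(n:ℝ)) ≤ B := by simp only [hB]; linarith
    have hb2 : (2*K+2*((n+1:ℕ):ℝ)) ≤ B := by simp only [hB]; push_cast; linarith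
    have hnn1 : (0:ℝ) ≤ 2*K+2*(n:ℝ) := by positivity
    have hnn2 : (0:ℝ) ≤ 2*K+2*((n+1:ℕ):ℝ) := by positivity
    have p1 : |physHermite n x| ≤ B^n := h1.trans (pow_le_pow_left₀ hnn1 hb1 n)
    have p2 : |physHermite (n+1) x| ≤ B^(n+1) := h2.trans (pow_le_pow_left₀ hnn2 hb2 (n+1))
    have h0 : |2 * x * physHermite (n + 1) x - 2 * ((n:ℝ) + 1) * physHermite n x|
        ≤ |2 * x * physHermite (n + 1) x| + |2 * ((n:ℝ) + 1) * physHermite n x| := by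
      rw [sub_eq_add_neg]
      exact (abs_add_le _ _).trans (by rw [abs_neg])
    have e1 : |2 * x * physHermite (n + 1) x| = 2 * |x| * |physHermite (n+1) x| := by
      rw [abs_mul, abs_mul]
      norm_num
    have e2 : |2 * ((n:ℝ) + 1) * physHermite n x| = (2 * ((n:ℝ)+1)) * |physHermite n x| := by
      rw [abs_mul, abs_mul]
      have : |((n:ℝ)+1)| = (n:ℝ)+1 := abs_of_nonneg (by positivity)
      rw [this]
      norm_num
    have t1 : 2 * |x| * |physHermite (n+1) x| ≤ 2*K*B^(n+1) := by
      have hxnn : (0:ℝ) ≤ |x| := abs_nonneg _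
      have habsnn : (0:ℝ) ≤ |physHermite (n+1) x| := abs_nonneg _
      nlinarith
    have t2 : (2 * ((n:ℝ)+1)) * |physHermite n x| ≤ (2*((n:ℝ)+1)) * B^n := by
      apply mul_le_mul_of_nonneg_left p1
      positivity
    have hBn : B^n ≤ B^(n+1) := pow_le_pow_right₀ hBpos (Nat.le_succ n)
    have final : 2*K*B^(n+1) + (2*((n:ℝ)+1)) * B^n ≤ B^(n+2) := by
      have : (2*((n:ℝ)+1)) * B^n ≤ (2*((n:ℝ)+1)) * B^(n+1) :=
        mul_le_mul_of_nonneg_left hBn (by positivity)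
      have hBB : B^(n+2) = B * B^(n+1) := by ring
      rw [hBB]
      have hBnn : (0:ℝ) ≤ B^(n+1) := by positivity
      nlinarith
    calc |physHermite (n+2) x| = |2 * x * physHermite (n + 1) x - 2 * ((n:ℝ) + 1) * physHermite n x| := by
          rw [physHermite_succ_succ]
      _ ≤ |2 * x * physHermite (n + 1) x| + |2 * ((n:ℝ) + 1) * physHermite n x| := h0
      _ = 2 * |x| * |physHermite (n+1) x| + (2 * ((n:ℝ)+1)) * |physHermite n x| := by rw [e1, e2]
      _ ≤ 2*K*B^(n+1) + (2*((n:ℝ)+1)) * B^n := add_le_add t1 t2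
      _ ≤ B^(n+2) := final
      _ = (2*K+2*((n+2:ℕ):ℝ))^(n+2) := by push_cast [hB]; ring

lemma hermite_sq_bound (K : ℝ) (hK : 0 < K) :
    ∃ D : ℝ, 0 ≤ D ∧ ∀ n : ℕ, ∀ x : ℝ, |x| ≤ K →
      (physHermite n x)^2 * Real.sqrt ((n:ℝ)+1) ≤ D * (2^n * (n.factorial : ℝ)) := by
  set M : ℕ := ⌈K^2⌉₊ + 1 with hM
  set g : ℕ → ℝ := fun j => (2*K+2*(j:ℝ))^(2*j) * Real.sqrt ((j:ℝ)+1) / (2^j * (j.factorial:ℝ)) with hg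
  have hgnn : ∀ j, 0 ≤ g j := by
    intro j
    simp only [hg]
    positivity
  set D : ℝ := Real.exp (K^2) * 4 + ∑ j ∈ Finset.range M, g j with hD
  have hsumnn : 0 ≤ ∑ j ∈ Finset.range M, g j := Finset.sum_nonneg (fun j _ => hgnn j)
  have hDnn : 0 ≤ D := by
    have : (0:ℝ) ≤ Real.exp (K^2) * 4 := by positivity
    simp only [hD]; linarith
  refine ⟨D, hDnn, ?_⟩
  intro n x hx
  have hfacpos : (0:ℝ) < (n.factorial : ℝ) := by positivity
  have h2npos : (0:ℝ) < (2:ℝ)^n := by positivity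
  by_cases hcase : K^2 ≤ (n:ℝ)
  · -- large n : use Cramer bound
    have hn1 : 1 ≤ n := by
      by_contra h
      have : n = 0 := by omega
      rw [this] at hcase
      simp at hcase
      nlinarith
    have hxsq : (physHermite n x)^2 ≤ Real.exp (K^2) * (4 * 2^n * (n.factorial : ℝ) / Real.sqrt ((n:ℝ)+1)) := by
      rcases le_or_gt 0 x with hx0 | hx0
      · exact hermite_sq_le_main K hK n hn1 hcase x hx0 (abs_le.mp hx).2
      · have hneg : (physHermite n x)^2 = (physHermite n (-x))^2 := by
          rw [physHermite_neg]
          rw [mul_pow]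
          have : ((-1:ℝ)^n)^2 = 1 := by
            rw [← pow_mul, mul_comm, pow_mul]
            norm_num
          rw [this, one_mul]
        rw [hneg]
        exact hermite_sq_le_main K hK n hn1 hcase (-x) (by linarith)
          (by have := (abs_le.mp hx).1; linarith)
    have hsq : Real.sqrt ((n:ℝ)+1) > 0 := Real.sqrt_pos.mpr (by positivity)
    have := mul_le_mul_of_nonneg_right hxsq (le_of_lt hsq)
    calc (physHermite n x)^2 * Real.sqrt ((n:ℝ)+1)
        ≤ Real.exp (K^2) * (4 * 2^n * (n.factorial : ℝ) / Real.sqrt ((n:ℝ)+1)) * Real.sqrt ((n:ℝ)+1) := this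
      _ = Real.exp (K^2) * 4 * (2^n * (n.factorial : ℝ)) := by
          field_simp
      _ ≤ D * (2^n * (n.factorial : ℝ)) := by
          apply mul_le_mul_of_nonneg_right _ (by positivity)
          simp only [hD]
          linarith
  · -- small n : crude bound
    push_neg at hcase
    have hnM : n ∈ Finset.range M := by
      apply Finset.mem_range.mpr
      have h1 : (n:ℝ) < K^2 := hcase
      have h2 : K^2 ≤ (⌈K^2⌉₊ : ℝ) := Nat.le_ceil _
      have : (n:ℝ) < (⌈K^2⌉₊:ℝ) := lt_of_lt_of_le h1 h2
      have : n < ⌈K^2⌉₊ := by exact_mod_cast this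
      omega
    have hgle : g n ≤ D := by
      have := Finset.single_le_sum (fun j _ => hgnn j) hnM
      have hexp : (0:ℝ) ≤ Real.exp (K^2) * 4 := by positivity
      simp only [hD]
      linarith
    have hcrude := hermite_crude K hK n x hx
    have hsqle : (physHermite n x)^2 ≤ (2*K+2*(n:ℝ))^(2*n) := by
      have h1 : (physHermite n x)^2 = |physHermite n x|^2 := (sq_abs _).symm
      rw [h1, show 2*n = n*2 from mul_comm 2 n, pow_mul]
      exact pow_le_pow_left₀ (abs_nonneg _) hcrude 2
    have hkey : (physHermite n x)^2 * Real.sqrt ((n:ℝ)+1) ≤ g n * (2^n * (n.factorial : ℝ)) := by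
      have : g n * (2^n * (n.factorial : ℝ)) = (2*K+2*(n:ℝ))^(2*n) * Real.sqrt ((n:ℝ)+1) := by
        simp only [hg]
        field_simp
      rw [this]
      exact mul_le_mul_of_nonneg_right hsqle (Real.sqrt_nonneg _)
    calc (physHermite n x)^2 * Real.sqrt ((n:ℝ)+1) ≤ g n * (2^n * (n.factorial : ℝ)) := hkey
      _ ≤ D * (2^n * (n.factorial : ℝ)) := mul_le_mul_of_nonneg_right hgle (by positivity)

lemma step_bound (a : ℝ) (ha : 1 ≤ a) :
    1/(a * Real.sqrt (a+1)) ≤ 4*(1/Real.sqrt a - 1/Real.sqrt (a+1)) := by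
  set s := Real.sqrt a with hs_def
  set t := Real.sqrt (a+1) with ht_def
  have hapos : (0:ℝ) < a := by linarith
  have hs : 0 < s := Real.sqrt_pos.mpr hapos
  have ht : 0 < t := Real.sqrt_pos.mpr (by linarith)
  have hs2 : s^2 = a := Real.sq_sqrt (le_of_lt hapos)
  have ht2 : t^2 = a+1 := Real.sq_sqrt (by linarith)
  have hts : t ≤ 3*s := by
    apply le_of_pow_le_pow_left₀ (two_ne_zero) (by positivity)
    rw [ht2, mul_pow, hs2]
    nlinarith
  have h1 : 1/s - 1/t = (t-s)/(s*t) := by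
    field_simp
  rw [h1, ← mul_div_assoc]
  rw [div_le_div_iff₀ (by nlinarith) (by positivity)]
  have hfact : (t-s)*(t+s) = 1 := by nlinarith
  have hst : s ≤ t := by
    rw [hs_def, ht_def]
    exact Real.sqrt_le_sqrt (by linarith)
  have hP : 0 ≤ (t-s)*(3*s-t) := mul_nonneg (by linarith) (by linarith)
  nlinarith [mul_pos hs ht, mul_nonneg (mul_nonneg hP hs.le) ht.le, hfact, hs2]

/-- Uniform boundedness of the rescaled truncated Hermite bilinear series on compact sets. -/
theorem hermite_truncated_series_uniform_bound (K : ℝ) (hK : 0 < K) :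
    ∃ C : ℝ, ∀ N : ℕ, 1 ≤ N → ∀ x ∈ Set.Icc (-K) K, ∀ y ∈ Set.Icc (-K) K,
      |Real.sqrt N *
        ∑' n : ℕ,
          physHermite (n + N + 1) x * physHermite (n + N + 1) y /
            (2 * ((n + N + 1 : ℕ) : ℝ) * 2 ^ (n + N + 1) * ((n + N + 1).factorial : ℝ))| ≤ C := by
  obtain ⟨D, hD0, hDb⟩ := hermite_sq_bound K hK
  refine ⟨2*D, ?_⟩
  intro N hN x hx y hy
  have hxK : |x| ≤ K := abs_le.mpr ⟨hx.1, hx.2⟩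
  have hyK : |y| ≤ K := abs_le.mpr ⟨hy.1, hy.2⟩
  set term : ℕ → ℝ := fun n => physHermite (n + N + 1) x * physHermite (n + N + 1) y /
      (2 * ((n + N + 1 : ℕ) : ℝ) * 2 ^ (n + N + 1) * ((n + N + 1).factorial : ℝ)) with hterm_def
  -- key pointwise estimate for any index m ≥ 1
  have key : ∀ m : ℕ, 1 ≤ m →
      |physHermite m x * physHermite m y / (2 * ((m:ℕ):ℝ) * 2^m * (m.factorial : ℝ))|
        ≤ 2*D*(1/Real.sqrt ((m:ℝ)) - 1/Real.sqrt ((m:ℝ)+1)) := by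
    intro m hm
    have hmR : (1:ℝ) ≤ (m:ℝ) := by exact_mod_cast hm
    have hden : (0:ℝ) < 2 * ((m:ℕ):ℝ) * 2^m * ((m).factorial : ℝ) := by
      have : (0:ℝ) < (m:ℝ) := by linarith
      positivity
    have hsq : (0:ℝ) < Real.sqrt ((m:ℝ)+1) := Real.sqrt_pos.mpr (by positivity)
    have hnum : |physHermite m x * physHermite m y|
        ≤ D * (2^m * ((m).factorial:ℝ)) / Real.sqrt ((m:ℝ)+1) := by
      have hx2 := hDb m x hxK
      have hy2 := hDb m y hyK
      have habs : |physHermite m x * physHermite m y| ≤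
          ((physHermite m x)^2 + (physHermite m y)^2)/2 := by
        rw [abs_mul]
        nlinarith [sq_nonneg (|physHermite m x| - |physHermite m y|),
          sq_abs (physHermite m x), sq_abs (physHermite m y),
          abs_nonneg (physHermite m x), abs_nonneg (physHermite m y)]
      rw [le_div_iff₀ hsq]
      calc |physHermite m x * physHermite m y| * Real.sqrt ((m:ℝ)+1)
          ≤ (((physHermite m x)^2 + (physHermite m y)^2)/2) * Real.sqrt ((m:ℝ)+1) :=
            mul_le_mul_of_nonneg_right habs (le_of_lt hsq)
        _ = ((physHermite m x)^2 * Real.sqrt ((m:ℝ)+1)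
              + (physHermite m y)^2 * Real.sqrt ((m:ℝ)+1))/2 := by ring
        _ ≤ (D * (2^m * ((m).factorial:ℝ)) + D * (2^m * ((m).factorial:ℝ)))/2 := by
            apply div_le_div_of_nonneg_right _ (by norm_num)
            · exact add_le_add hx2 hy2
        _ = D * (2^m * ((m).factorial:ℝ)) := by ring
    have step1 : |physHermite m x * physHermite m y / (2 * ((m:ℕ):ℝ) * 2^m * (m.factorial : ℝ))|
        ≤ (D * (2^m * ((m).factorial:ℝ)) / Real.sqrt ((m:ℝ)+1)) / (2 * ((m:ℕ):ℝ) * 2^m * (m.factorial : ℝ)) := by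
      rw [abs_div, abs_of_pos hden]
      exact div_le_div_of_nonneg_right hnum hden.le
    have step2 : (D * (2^m * ((m).factorial:ℝ)) / Real.sqrt ((m:ℝ)+1)) / (2 * ((m:ℕ):ℝ) * 2^m * (m.factorial : ℝ))
        = (D/2) * (1/((m:ℝ) * Real.sqrt ((m:ℝ)+1))) := by
      have hm0 : ((m:ℕ):ℝ) ≠ 0 := by
        have : (0:ℝ) < (m:ℝ) := by linarith
        exact ne_of_gt this
      field_simp
    have step3 : (D/2) * (1/((m:ℝ) * Real.sqrt ((m:ℝ)+1)))
        ≤ (D/2) * (4*(1/Real.sqrt ((m:ℝ)) - 1/Real.sqrt ((m:ℝ)+1))) := by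
      apply mul_le_mul_of_nonneg_left (step_bound (m:ℝ) hmR) (by linarith)
    calc |physHermite m x * physHermite m y / (2 * ((m:ℕ):ℝ) * 2^m * (m.factorial : ℝ))|
        ≤ (D * (2^m * ((m).factorial:ℝ)) / Real.sqrt ((m:ℝ)+1)) / (2 * ((m:ℕ):ℝ) * 2^m * (m.factorial : ℝ)) := step1
      _ = (D/2) * (1/((m:ℝ) * Real.sqrt ((m:ℝ)+1))) := step2
      _ ≤ (D/2) * (4*(1/Real.sqrt ((m:ℝ)) - 1/Real.sqrt ((m:ℝ)+1))) := step3
      _ = 2*D*(1/Real.sqrt ((m:ℝ)) - 1/Real.sqrt ((m:ℝ)+1)) := by ring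
  set f : ℕ → ℝ := fun k => 1/Real.sqrt (((k+N+1:ℕ)):ℝ) with hf_def
  set g : ℕ → ℝ := fun n => 2*D*(f n - f (n+1)) with hg_def
  have hfanti : ∀ k, f (k+1) ≤ f k := by
    intro k
    simp only [hf_def]
    apply one_div_le_one_div_of_le
    · apply Real.sqrt_pos.mpr
      have : (0:ℕ) < k+N+1 := by omega
      exact_mod_cast this
    · apply Real.sqrt_le_sqrt
      have : k+N+1 ≤ k+1+N+1 := by omega
      exact_mod_cast this
  have hfnonneg : ∀ k, 0 ≤ f k := by
    intro k; simp only [hf_def]; positivity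
  have hgnn : ∀ n, 0 ≤ g n := by
    intro n
    simp only [hg_def]
    have := hfanti n
    nlinarith
  have hbound : ∀ n, |term n| ≤ g n := by
    intro n
    have h := key (n+N+1) (by omega)
    have e1 : ((n+1+N+1:ℕ):ℝ) = ((n+N+1:ℕ):ℝ)+1 := by push_cast; ring
    simp only [hterm_def, hg_def, hf_def]
    rw [e1]
    exact h
  -- partial sums of g
  have hpartial : ∀ k, ∑ i ∈ Finset.range k, g i ≤ 2*D*(f 0) := by
    intro k
    have : ∑ i ∈ Finset.range k, g i = 2*D*(f 0 - f k) := by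
      simp only [hg_def]
      rw [← Finset.mul_sum, Finset.sum_range_sub' f]
    rw [this]
    have := hfnonneg k
    nlinarith
  have hsg : Summable g := summable_of_sum_range_le hgnn hpartial
  have habs_sum : Summable (fun n => |term n|) :=
    Summable.of_nonneg_of_le (fun n => abs_nonneg _) hbound hsg
  have hterm_sum : Summable term := by
    rw [← summable_abs_iff]
    exact habs_sum
  have htsum1 : |∑' n, term n| ≤ ∑' n, |term n| := by
    have := norm_tsum_le_tsum_norm (by simpa [Real.norm_eq_abs] using habs_sum : Summable (fun n => ‖term n‖))
    simpa [Real.norm_eq_abs] using this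
  have htsum2 : ∑' n, |term n| ≤ ∑' n, g n := Summable.tsum_le_tsum hbound habs_sum hsg
  have htsum3 : ∑' n, g n ≤ 2*D*(f 0) := Real.tsum_le_of_sum_range_le hgnn hpartial
  have hf0 : f 0 = 1/Real.sqrt (((N+1:ℕ)):ℝ) := by
    simp only [hf_def]
    norm_num
  have hNpos : (0:ℝ) < Real.sqrt ((N:ℝ)) := Real.sqrt_pos.mpr (by exact_mod_cast Nat.pos_of_ne_zero (by omega))
  have hsqrtle : Real.sqrt ((N:ℝ)) * f 0 ≤ 1 := by
    rw [hf0]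
    have hcast : (((N+1:ℕ)):ℝ) = (N:ℝ)+1 := by push_cast; ring
    rw [hcast]
    have h1 : Real.sqrt ((N:ℝ)) ≤ Real.sqrt ((N:ℝ)+1) := Real.sqrt_le_sqrt (by linarith)
    have h2 : (0:ℝ) < Real.sqrt ((N:ℝ)+1) := Real.sqrt_pos.mpr (by positivity)
    rw [mul_one_div, div_le_one h2]
    exact h1
  calc |Real.sqrt (N:ℝ) * ∑' n, term n| = Real.sqrt (N:ℝ) * |∑' n, term n| := by
        rw [abs_mul, abs_of_nonneg (Real.sqrt_nonneg _)]
    _ ≤ Real.sqrt (N:ℝ) * (2*D*(f 0)) := by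
        apply mul_le_mul_of_nonneg_left _ (Real.sqrt_nonneg _)
        exact le_trans htsum1 (le_trans htsum2 htsum3)
    _ = 2*D*(Real.sqrt (N:ℝ) * f 0) := by ring
    _ ≤ 2*D := by
        nlinarith [hsqrtle]
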